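/- arXiv:2311.13465 — 3 statements merged into one kernel-verified Lean document; each statement's English description precedes it below -/
import Mathlib

section
/- Let $W>0$, $T\geq 0$, and let $\xi$ have distribution function $F^{(T)}_W(t)=1-\exp(-W(e^t-e^T))$ for $t\geq T$ (and $0$ for $t<T$). Then $\mathbb{E}(\xi-T)\leq 1/(We^T)$ and $\mathbb{E}(\xi-T)^2\leq 2/(We^T)^2$. -/
/-!
Almost surely `ξ ≥ T`, and `P(ξ - T > s) = exp (-W e^T (e^s - 1)) ≤ exp (-W e^T s)`: the
overshoot `ξ - T` is stochastically dominated by an exponential variable of rate `W e^T`.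
The layer-cake formula then bounds its `p`-th moment by the exponential one, `Γ(p+1)/(W e^T)^p`.
-/

open MeasureTheory Set Real

lemma lintegral_exp_neg_mul_mul_rpow_Ioi {l p : ℝ} (hl : 0 < l) (hp : 0 < p) :
    ∫⁻ t in Ioi 0, ENNReal.ofReal (exp (-(l * t))) * ENNReal.ofReal (t ^ (p - 1))
      = ENNReal.ofReal ((1 / l) ^ p * Gamma p) := by
  have hint := integral_rpow_mul_exp_neg_mul_Ioi hp hl
  have hfi : IntegrableOn (fun t : ℝ => t ^ (p - 1) * exp (-(l * t))) (Ioi 0) :=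
    Integrable.of_integral_ne_zero (by rw [hint]; positivity)
  rw [← hint, ofReal_integral_eq_lintegral_ofReal hfi]
  · refine setLIntegral_congr_fun measurableSet_Ioi fun t _ => ?_
    rw [← ENNReal.ofReal_mul (exp_pos _).le, mul_comm]
  · filter_upwards [ae_restrict_mem measurableSet_Ioi] with t ht
    exact mul_nonneg (rpow_nonneg (le_of_lt ht) _) (exp_pos _).le

section

variable {Ω : Type*} [MeasurableSpace Ω] {μ : Measure Ω} {Y : Ω → ℝ} {l : ℝ}

lemma lintegral_rpow_le_of_meas_lt_le_exp (hY : 0 ≤ᵐ[μ] Y) (hYm : AEMeasurable Y μ)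
    (hl : 0 < l) (htail : ∀ t > 0, μ {ω | t < Y ω} ≤ ENNReal.ofReal (exp (-(l * t))))
    {p : ℝ} (hp : 0 < p) :
    ∫⁻ ω, ENNReal.ofReal (Y ω ^ p) ∂μ ≤ ENNReal.ofReal (Gamma (p + 1) / l ^ p) := by
  calc ∫⁻ ω, ENNReal.ofReal (Y ω ^ p) ∂μ
      = ENNReal.ofReal p * ∫⁻ t in Ioi 0, μ {ω | t < Y ω} * ENNReal.ofReal (t ^ (p - 1)) :=
        lintegral_rpow_eq_lintegral_meas_lt_mul μ hY hYm hp
    _ ≤ ENNReal.ofReal p *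
          ∫⁻ t in Ioi 0, ENNReal.ofReal (exp (-(l * t))) * ENNReal.ofReal (t ^ (p - 1)) := by
        gcongr ENNReal.ofReal p * ?_
        refine setLIntegral_mono' measurableSet_Ioi fun t ht => ?_
        gcongr
        exact htail t ht
    _ = ENNReal.ofReal (Gamma (p + 1) / l ^ p) := by
        rw [lintegral_exp_neg_mul_mul_rpow_Ioi hl hp, ← ENNReal.ofReal_mul hp.le,
          Gamma_add_one hp.ne', div_rpow zero_le_one hl.le, one_rpow]
        ring_nf

lemma integral_rpow_le_of_meas_lt_le_exp (hY : 0 ≤ᵐ[μ] Y) (hYm : AEMeasurable Y μ)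
    (hl : 0 < l) (htail : ∀ t > 0, μ {ω | t < Y ω} ≤ ENNReal.ofReal (exp (-(l * t))))
    {p : ℝ} (hp : 0 < p) :
    ∫ ω, Y ω ^ p ∂μ ≤ Gamma (p + 1) / l ^ p := by
  rw [integral_eq_lintegral_of_nonneg_ae]
  · exact ENNReal.toReal_le_of_le_ofReal (by positivity)
      (lintegral_rpow_le_of_meas_lt_le_exp hY hYm hl htail hp)
  · filter_upwards [hY] with ω hω using rpow_nonneg hω p
  · exact (hYm.pow_const p).aestronglyMeasurable

lemma ae_le_of_forall_lt_measure_le_eq_zero {ξ : Ω → ℝ} {T : ℝ}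
    (h : ∀ t < T, μ {ω | ξ ω ≤ t} = 0) : ∀ᵐ ω ∂μ, T ≤ ξ ω := by
  have hsub : {ω | ¬T ≤ ξ ω} ⊆ ⋃ q : {q : ℚ // (q : ℝ) < T}, {ω | ξ ω ≤ q} := by
    intro ω hω
    obtain ⟨q, hξq, hqT⟩ := exists_rat_btwn (not_le.1 hω)
    exact mem_iUnion.2 ⟨⟨q, hqT⟩, hξq.le⟩
  exact measure_mono_null hsub (measure_iUnion_null fun q => h q q.2)

lemma measure_lt_sub_eq_exp [IsProbabilityMeasure μ] {ξ : Ω → ℝ} (hξ : Measurable ξ) {W T : ℝ} (hW : 0 ≤ W)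
    (hcdf : ∀ t : ℝ, μ {ω | ξ ω ≤ t}
      = ENNReal.ofReal (if T ≤ t then 1 - exp (-(W * (exp t - exp T))) else 0))
    {s : ℝ} (hs : 0 ≤ s) :
    μ {ω | s < ξ ω - T} = ENNReal.ofReal (exp (-(W * exp T * (exp s - 1)))) := by
  have hcompl : {ω | s < ξ ω - T} = {ω | ξ ω ≤ T + s}ᶜ := by
    ext ω; simp [lt_sub_iff_add_lt']
  have hexp : exp T * (exp s - 1) = exp (T + s) - exp T := by rw [exp_add]; ring
  have hle : exp (-(W * (exp (T + s) - exp T))) ≤ 1 := by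
    rw [exp_le_one_iff, neg_nonpos]
    exact mul_nonneg hW (sub_nonneg.2 (exp_le_exp.2 (by linarith)))
  rw [hcompl, prob_compl_eq_one_sub (measurableSet_le hξ measurable_const), hcdf,
    if_pos (by linarith), ← ENNReal.ofReal_one, ← ENNReal.ofReal_sub _ (by linarith),
    mul_assoc, hexp, sub_sub_cancel]

end

theorem stmt_1_general {Ω : Type*} [MeasurableSpace Ω] (μ : Measure Ω) [IsProbabilityMeasure μ]
    (W T : ℝ) (hW : 0 < W) (ξ : Ω → ℝ) (hξ : Measurable ξ)
    (hcdf : ∀ t : ℝ, μ {ω | ξ ω ≤ t}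
      = ENNReal.ofReal (if T ≤ t then 1 - Real.exp (-(W * (Real.exp t - Real.exp T))) else 0)) :
    (∫ ω, (ξ ω - T) ∂μ) ≤ 1 / (W * Real.exp T) ∧
      (∫ ω, (ξ ω - T) ^ 2 ∂μ) ≤ 2 / (W * Real.exp T) ^ 2 := by
  set l := W * exp T
  have hl : 0 < l := by positivity
  have hξT : ∀ᵐ ω ∂μ, T ≤ ξ ω := ae_le_of_forall_lt_measure_le_eq_zero fun t ht => by
    rw [hcdf, if_neg (not_le.2 ht), ENNReal.ofReal_zero]
  have hY : 0 ≤ᵐ[μ] fun ω => ξ ω - T := hξT.mono fun ω hω => sub_nonneg.2 hω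
  have htail : ∀ s > 0, μ {ω | s < ξ ω - T} ≤ ENNReal.ofReal (exp (-(l * s))) := fun s hs => by
    rw [measure_lt_sub_eq_exp hξ hW.le hcdf hs.le]
    gcongr
    linarith [add_one_le_exp s]
  have hYm : AEMeasurable (fun ω => ξ ω - T) μ := (hξ.sub_const T).aemeasurable
  constructor
  · simpa [one_add_one_eq_two, Gamma_two] using
      integral_rpow_le_of_meas_lt_le_exp hY hYm hl htail one_pos
  · simpa [show (2 : ℝ) + 1 = 3 by norm_num, Gamma_ofNat_eq_factorial] using
      integral_rpow_le_of_meas_lt_le_exp hY hYm hl htail two_pos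

theorem stmt_1 {Ω : Type*} [MeasurableSpace Ω] (μ : Measure Ω) [IsProbabilityMeasure μ]
    (W T : ℝ) (hW : 0 < W) (hT : 0 ≤ T) (ξ : Ω → ℝ) (hξ : Measurable ξ)
    (hcdf : ∀ t : ℝ, μ {ω | ξ ω ≤ t}
      = ENNReal.ofReal (if T ≤ t then 1 - Real.exp (-(W * (Real.exp t - Real.exp T))) else 0))
    (hint1 : Integrable (fun ω => ξ ω - T) μ)
    (hint2 : Integrable (fun ω => (ξ ω - T) ^ 2) μ) :
    (∫ ω, (ξ ω - T) ∂μ) ≤ 1 / (W * Real.exp T) ∧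
      (∫ ω, (ξ ω - T) ^ 2 ∂μ) ≤ 2 / (W * Real.exp T) ^ 2 :=
  stmt_1_general μ W T hW ξ hξ hcdf
end

section
/- Let $V$ be a finite set with $|V|=d\geq 2$ and $(x_i)_{i\in V}$ a probability vector. With $H(x)=\sum_i x_i(1-x_i)$ and $J(x)=2\sum_{i\in V}x_i(N_i(x)-H(x))^2$ where $N_i(x)=1-x_i$, one has $J(x)=2\sum_{i\in V}x_i(x_i-\tfrac{1}{d})^2-2\left(H(z^*)-H(x)\right)^2$, where $z^*_i=1/d$ for all $i$. -/
/-!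
With `m = ∑ x_i²`, one has `H(x) = 1 - m` and `N_i(x) - H(x) = m - x_i`, so `J(x) / 2` is the
variance of the values `x_i` under the weights `x_i`, whose mean is `m`; and
`H(z*) - H(x) = m - 1/d`. The identity is thus the König–Huygens formula for that variance,
centred at `1/d`.
-/

open Finset

theorem Finset.sum_mul_sub_weightedMean_sq {ι R : Type*} [CommRing R] (s : Finset ι)
    (w f : ι → R) (hw : ∑ i ∈ s, w i = 1) (c : R) :
    ∑ i ∈ s, w i * (f i - ∑ j ∈ s, w j * f j) ^ 2
      = ∑ i ∈ s, w i * (f i - c) ^ 2 - (∑ j ∈ s, w j * f j - c) ^ 2 := by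
  set m := ∑ j ∈ s, w j * f j
  have hdev : ∑ i ∈ s, w i * (f i - c) = m - c := by
    simp only [mul_sub, sum_sub_distrib, ← sum_mul, hw, one_mul, m]
  calc ∑ i ∈ s, w i * (f i - m) ^ 2
      = ∑ i ∈ s, (w i * (f i - c) ^ 2 - 2 * (m - c) * (w i * (f i - c)) + (m - c) ^ 2 * w i) :=
        sum_congr rfl fun i _ => by ring
    _ = ∑ i ∈ s, w i * (f i - c) ^ 2 - 2 * (m - c) * (m - c) + (m - c) ^ 2 := by
        rw [sum_add_distrib, sum_sub_distrib, ← mul_sum, ← mul_sum, hdev, hw, mul_one]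
    _ = ∑ i ∈ s, w i * (f i - c) ^ 2 - (m - c) ^ 2 := by ring

theorem stmt_6_general {V : Type*} [Fintype V] (d : ℕ)
    (x : V → ℝ) (hx1 : ∑ i, x i = 1) :
    2 * ∑ i, x i * ((1 - x i) - ∑ j, x j * (1 - x j)) ^ 2
      = 2 * (∑ i, x i * (x i - 1 / d) ^ 2)
        - 2 * ((1 - 1 / d) - ∑ i, x i * (1 - x i)) ^ 2 := by
  have hH : ∑ j, x j * (1 - x j) = 1 - ∑ j, x j * x j := by
    simp only [mul_sub, mul_one, sum_sub_distrib, hx1]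
  have hvar := sum_mul_sub_weightedMean_sq univ x x hx1 (1 / d)
  calc 2 * ∑ i, x i * ((1 - x i) - ∑ j, x j * (1 - x j)) ^ 2
      = 2 * ∑ i, x i * (x i - ∑ j, x j * x j) ^ 2 := by
        rw [hH]; congr 1; exact sum_congr rfl fun i _ => by ring
    _ = _ := by rw [hvar, hH]; ring

theorem stmt_6 {V : Type*} [Fintype V] (d : ℕ) (hd : d = Fintype.card V) (hd2 : 2 ≤ d)
    (x : V → ℝ) (hx0 : ∀ i, 0 ≤ x i) (hx1 : ∑ i, x i = 1) :
    2 * ∑ i, x i * ((1 - x i) - ∑ j, x j * (1 - x j)) ^ 2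
      = 2 * (∑ i, x i * (x i - 1 / d) ^ 2)
        - 2 * ((1 - 1 / d) - ∑ i, x i * (1 - x i)) ^ 2 :=
  stmt_6_general d x hx1
end

section
/- Let $d\geq 2$ and let $C_1<2/d<C_2$ be real constants. Then there exists $\delta>0$ such that for every probability vector $x$ on $d$ vertices with $\|x-z^*\|_2<\delta$ (where $z^*$ is the uniform vector), one has $C_1(H(z^*)-H(x))\leq J(x)\leq C_2(H(z^*)-H(x))$, where $H(x)=\sum_i x_i(1-x_i)$ and $J(x)=2\sum_i x_i(1-x_i-H(x))^2$. -/
/-!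
Write `x = z* + y` with `∑ y = 0` and `S = ‖y‖²`. Then `H(z*) - H(x) = S` exactly, while
`J(x) = 2 (S/d - S² + ∑ yᵢ³)`. Since `|∑ yᵢ³| ≤ ‖y‖ S` and `S² ≤ ‖y‖ S` for `‖y‖ ≤ 1`,
`J(x) = (2/d) (H(z*) - H(x)) + O(‖y‖ S)`, and the error is absorbed by the gaps `2/d - C₁`
and `C₂ - 2/d` once `‖y‖` is small.
-/

open Finset

theorem abs_sum_pow_three_le_sqrt_mul {ι : Type*} [Fintype ι] (y : ι → ℝ) :
    |∑ i, y i ^ 3| ≤ √(∑ i, y i ^ 2) * ∑ i, y i ^ 2 := by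
  have h_abs_le : ∀ i, |y i| ≤ √(∑ j, y j ^ 2) := fun i => by
    rw [← Real.sqrt_sq_eq_abs]
    exact Real.sqrt_le_sqrt (single_le_sum (fun j _ => sq_nonneg (y j)) (mem_univ i))
  calc |∑ i, y i ^ 3| ≤ ∑ i, |y i| * y i ^ 2 := by
        refine (abs_sum_le_sum_abs _ _).trans_eq (sum_congr rfl fun i _ => ?_)
        rw [abs_pow, ← sq_abs (y i)]
        ring
    _ ≤ ∑ i, √(∑ j, y j ^ 2) * y i ^ 2 :=
        sum_le_sum fun i _ => mul_le_mul_of_nonneg_right (h_abs_le i) (sq_nonneg _)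
    _ = √(∑ i, y i ^ 2) * ∑ i, y i ^ 2 := (mul_sum _ _ _).symm

namespace Heterozygosity

variable {ι : Type*} [Fintype ι]

def H (x : ι → ℝ) : ℝ := ∑ i, x i * (1 - x i)

def J (x : ι → ℝ) : ℝ := 2 * ∑ i, x i * ((1 - x i) - H x) ^ 2

noncomputable def sqDistUniform (x : ι → ℝ) : ℝ := ∑ i, (x i - 1 / Fintype.card ι) ^ 2

variable {x : ι → ℝ}

theorem sqDistUniform_nonneg (x : ι → ℝ) : 0 ≤ sqDistUniform x :=
  sum_nonneg fun _ _ => sq_nonneg _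

theorem card_ne_zero_of_sum_eq_one (hx : ∑ i, x i = 1) : (Fintype.card ι : ℝ) ≠ 0 := by
  have : Nonempty ι := by
    by_contra h
    simp [not_nonempty_iff.mp h] at hx
  positivity

theorem sum_sub_one_div_card_eq_zero (hx : ∑ i, x i = 1) :
    ∑ i, (x i - 1 / Fintype.card ι) = 0 := by
  have := card_ne_zero_of_sum_eq_one hx
  simp [sum_sub_distrib, hx, this]

theorem H_eq (hx : ∑ i, x i = 1) :
    H x = (1 - 1 / Fintype.card ι) - sqDistUniform x := by
  have hn := card_ne_zero_of_sum_eq_one hx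
  have hy := sum_sub_one_div_card_eq_zero hx
  set c : ℝ := 1 / Fintype.card ι
  have hc : Fintype.card ι * c = 1 := by simp [c, hn]
  have h_expand : ∀ i, x i * (1 - x i) = c * (1 - c) + (1 - 2 * c) * (x i - c) - (x i - c) ^ 2 :=
    fun i => by ring
  simp only [H, sqDistUniform, h_expand, sum_sub_distrib, sum_add_distrib, ← mul_sum, hy,
    sum_const, card_univ, nsmul_eq_mul]
  linear_combination (1 - c) * hc

theorem J_eq (hx : ∑ i, x i = 1) :
    J x = 2 * (sqDistUniform x / Fintype.card ι - sqDistUniform x ^ 2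
      + ∑ i, (x i - 1 / Fintype.card ι) ^ 3) := by
  have hn := card_ne_zero_of_sum_eq_one hx
  have hy := sum_sub_one_div_card_eq_zero hx
  rw [J, H_eq hx]
  set S := sqDistUniform x
  set c : ℝ := 1 / Fintype.card ι
  have hc : Fintype.card ι * c = 1 := by simp [c, hn]
  have h_expand : ∀ i, x i * ((1 - x i) - (1 - c - S)) ^ 2
      = c * S ^ 2 + (S ^ 2 - 2 * S * c) * (x i - c) + (c - 2 * S) * (x i - c) ^ 2
        + (x i - c) ^ 3 :=
    fun i => by ring
  simp only [h_expand, sum_add_distrib, ← mul_sum, hy, sum_const, card_univ, nsmul_eq_mul]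
  have hS : ∑ i, (x i - c) ^ 2 = S := rfl
  have hSc : S / Fintype.card ι = c * S := by simp only [c]; ring
  rw [hS, hSc]
  linear_combination 2 * S ^ 2 * hc

theorem abs_J_sub_le (hx : ∑ i, x i = 1) (hS : √(sqDistUniform x) ≤ 1) :
    |J x - 2 / Fintype.card ι * sqDistUniform x|
      ≤ 4 * √(sqDistUniform x) * sqDistUniform x := by
  have h_cube : |∑ i, (x i - 1 / Fintype.card ι) ^ 3| ≤ √(sqDistUniform x) * sqDistUniform x :=
    abs_sum_pow_three_le_sqrt_mul fun i => x i - 1 / Fintype.card ι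
  rw [J_eq hx]
  set S := sqDistUniform x
  have hS₀ : 0 ≤ S := sqDistUniform_nonneg x
  have h_sq : S ^ 2 ≤ √S * S := by
    rw [sq]
    exact mul_le_mul_of_nonneg_right (Real.le_sqrt_self_iff.mpr (Real.sqrt_le_one.mp hS)) hS₀
  set T := ∑ i, (x i - 1 / Fintype.card ι) ^ 3
  rw [show 2 * (S / Fintype.card ι - S ^ 2 + T) - 2 / Fintype.card ι * S = 2 * (T - S ^ 2) by ring,
    abs_le]
  constructor <;> linarith [abs_le.mp h_cube, mul_nonneg (Real.sqrt_nonneg S) hS₀, sq_nonneg S]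

end Heterozygosity

open Heterozygosity in
theorem stmt_7_general (d : ℕ) (C₁ C₂ : ℝ) (hC₁ : C₁ < 2 / d) (hC₂ : 2 / d < C₂) :
    ∃ δ > 0, ∀ x : Fin d → ℝ, (∀ i, 0 ≤ x i) → (∑ i, x i = 1) →
      Real.sqrt (∑ i, (x i - 1 / d) ^ 2) < δ →
      C₁ * ((1 - 1 / d) - ∑ i, x i * (1 - x i))
          ≤ 2 * ∑ i, x i * ((1 - x i) - ∑ j, x j * (1 - x j)) ^ 2
        ∧ 2 * ∑ i, x i * ((1 - x i) - ∑ j, x j * (1 - x j)) ^ 2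
          ≤ C₂ * ((1 - 1 / d) - ∑ i, x i * (1 - x i)) := by
  set ε := min (2 / (d : ℝ) - C₁) (C₂ - 2 / d)
  have hε : 0 < ε := lt_min (sub_pos.mpr hC₁) (sub_pos.mpr hC₂)
  refine ⟨min 1 (ε / 4), by positivity, fun x _ hx hδ => ?_⟩
  have h_dist : sqDistUniform x = ∑ i, (x i - 1 / d) ^ 2 := by simp [sqDistUniform]
  have h_gap : (1 - 1 / d) - H x = sqDistUniform x := by
    rw [H_eq hx, Fintype.card_fin]
    ring
  rw [← h_dist] at hδ
  have h_err := abs_le.mp (abs_J_sub_le hx (hδ.le.trans (min_le_left _ _)))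
  simp only [Fintype.card_fin] at h_err
  change C₁ * ((1 - 1 / d) - H x) ≤ J x ∧ J x ≤ C₂ * ((1 - 1 / d) - H x)
  rw [h_gap]
  set S := sqDistUniform x
  have hS₀ : 0 ≤ S := sqDistUniform_nonneg x
  have h_small : 4 * √S ≤ ε := by linarith [hδ.le.trans (min_le_right _ _)]
  constructor
  · linarith [mul_le_mul_of_nonneg_right (h_small.trans (min_le_left _ _)) hS₀]
  · linarith [mul_le_mul_of_nonneg_right (h_small.trans (min_le_right _ _)) hS₀]

theorem stmt_7 (d : ℕ) (hd : 2 ≤ d) (C₁ C₂ : ℝ) (hC₁ : C₁ < 2 / d) (hC₂ : 2 / d < C₂) :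
    ∃ δ > 0, ∀ x : Fin d → ℝ, (∀ i, 0 ≤ x i) → (∑ i, x i = 1) →
      Real.sqrt (∑ i, (x i - 1 / d) ^ 2) < δ →
      C₁ * ((1 - 1 / d) - ∑ i, x i * (1 - x i))
          ≤ 2 * ∑ i, x i * ((1 - x i) - ∑ j, x j * (1 - x j)) ^ 2
        ∧ 2 * ∑ i, x i * ((1 - x i) - ∑ j, x j * (1 - x j)) ^ 2
          ≤ C₂ * ((1 - 1 / d) - ∑ i, x i * (1 - x i)) :=
  stmt_7_general d C₁ C₂ hC₁ hC₂
end
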